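/- arXiv:2605.28513 — 2 statements merged into one kernel-verified Lean document; each statement's English description precedes it below -/
import Mathlib

section
/- Coercivity of smooth convex functions: let H be a real inner product space and let g : H → ℝ be differentiable, convex, and α-smooth for some α > 0. Then for all w, w' ∈ H, ⟨w − w', ∇g(w) − ∇g(w')⟩ ≥ (1/α)‖∇g(w) − ∇g(w')‖². -/
/-!
Evaluating the supporting-hyperplane inequality of `g` at `w'` in the gradient step
`w - s (∇g w - ∇g w')` and bounding `g` there by the descent lemma
`g (x + v) ≤ g x + ⟪v, ∇g x⟫ + α/2 ‖v‖²` sharpens convexity by `(s - α s²/2) ‖∇g w - ∇g w'‖²`.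
Adding this to the same inequality with `w` and `w'` exchanged and taking `s = 1/α` gives the claim.
-/

open RealInnerProductSpace

section
variable {H : Type*} [NormedAddCommGroup H] [InnerProductSpace ℝ H] [CompleteSpace H]
  {g : H → ℝ} {L : ℝ}

theorem hasDerivAt_apply_add_smul (hg : Differentiable ℝ g) (x v : H) (t : ℝ) :
    HasDerivAt (fun t : ℝ => g (x + t • v)) ⟪v, gradient g (x + t • v)⟫ t := by
  have hline : HasDerivAt (fun t : ℝ => x + t • v) v t := by
    simpa using ((hasDerivAt_id t).smul_const v).const_add x
  rw [real_inner_comm]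
  exact (hg _).hasGradientAt.hasFDerivAt.comp_hasDerivAt t hline

theorem inner_gradient_add_smul_sub_le
    (hL : ∀ x y, ‖gradient g x - gradient g y‖ ≤ L * ‖x - y‖) (x v : H) {t : ℝ} (ht : 0 ≤ t) :
    ⟪v, gradient g (x + t • v) - gradient g x⟫ ≤ L * t * ‖v‖ ^ 2 :=
  calc ⟪v, gradient g (x + t • v) - gradient g x⟫
      ≤ ‖v‖ * ‖gradient g (x + t • v) - gradient g x‖ := real_inner_le_norm _ _
    _ ≤ ‖v‖ * (L * ‖x + t • v - x‖) := by gcongr; exact hL _ _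
    _ = L * t * ‖v‖ ^ 2 := by
      rw [add_sub_cancel_left, norm_smul, Real.norm_of_nonneg ht]; ring

theorem apply_add_le_of_gradient_lipschitz (hg : Differentiable ℝ g)
    (hL : ∀ x y, ‖gradient g x - gradient g y‖ ≤ L * ‖x - y‖) (x v : H) :
    g (x + v) ≤ g x + ⟪v, gradient g x⟫ + L / 2 * ‖v‖ ^ 2 := by
  set B : ℝ → ℝ := fun t => g x + t * ⟪v, gradient g x⟫ + L / 2 * t ^ 2 * ‖v‖ ^ 2
  have hB : ∀ t, HasDerivAt B (⟪v, gradient g x⟫ + L * t * ‖v‖ ^ 2) t := by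
    intro t
    have := (((hasDerivAt_id t).mul_const ⟪v, gradient g x⟫).const_add (g x)).add
      (((hasDerivAt_pow 2 t).const_mul (L / 2)).mul_const (‖v‖ ^ 2))
    exact this.congr_deriv (by ring)
  have hf := hasDerivAt_apply_add_smul hg x v
  have hle := image_le_of_deriv_right_le_deriv_boundary (a := 0) (b := 1)
    (fun t _ => (hf t).continuousAt.continuousWithinAt) (fun t _ => (hf t).hasDerivWithinAt)
    (by simp [B]) (fun t _ => (hB t).continuousAt.continuousWithinAt)
    (fun t _ => (hB t).hasDerivWithinAt) (fun t ht => by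
      have := inner_gradient_add_smul_sub_le hL x v ht.1
      rw [inner_sub_right] at this
      linarith) (Set.right_mem_Icc.2 zero_le_one)
  simpa [B] using hle

theorem add_inner_gradient_add_mul_norm_sq_le (hg : Differentiable ℝ g)
    (hconv : ∀ w w' : H, g w' + ⟪w - w', gradient g w'⟫ ≤ g w)
    (hL : ∀ x y, ‖gradient g x - gradient g y‖ ≤ L * ‖x - y‖) (s : ℝ) (w w' : H) :
    g w' + ⟪w - w', gradient g w'⟫ + (s - L / 2 * s ^ 2) * ‖gradient g w - gradient g w'‖ ^ 2
      ≤ g w := by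
  set u := gradient g w - gradient g w'
  have hdescent := apply_add_le_of_gradient_lipschitz hg hL w (-(s • u))
  have hsupport := hconv (w + -(s • u)) w'
  have hu : s * ⟪u, gradient g w⟫ - s * ⟪u, gradient g w'⟫ = s * ‖u‖ ^ 2 := by
    rw [← mul_sub, ← inner_sub_right, real_inner_self_eq_norm_sq]
  rw [← sub_eq_add_neg, norm_neg, norm_smul, mul_pow, Real.norm_eq_abs, sq_abs, inner_neg_left,
    real_inner_smul_left] at hdescent
  rw [← sub_eq_add_neg, sub_right_comm, inner_sub_left, real_inner_smul_left] at hsupport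
  linarith

theorem mul_norm_sq_gradient_sub_le_inner (hg : Differentiable ℝ g)
    (hconv : ∀ w w' : H, g w' + ⟪w - w', gradient g w'⟫ ≤ g w)
    (hL : ∀ x y, ‖gradient g x - gradient g y‖ ≤ L * ‖x - y‖) (s : ℝ) (w w' : H) :
    (2 * s - L * s ^ 2) * ‖gradient g w - gradient g w'‖ ^ 2 ≤
      ⟪w - w', gradient g w - gradient g w'⟫ := by
  have h := add_inner_gradient_add_mul_norm_sq_le hg hconv hL s w w'
  have h' := add_inner_gradient_add_mul_norm_sq_le hg hconv hL s w' w
  rw [norm_sub_rev, ← neg_sub w w', inner_neg_left] at h'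
  rw [inner_sub_right]
  linarith

end

theorem coercivity_of_smooth_convex_general
    {H : Type*} [NormedAddCommGroup H] [InnerProductSpace ℝ H] [CompleteSpace H]
    (g : H → ℝ) (α : ℝ)
    (hdiff : Differentiable ℝ g)
    (hconv : ∀ w w' : H, g w' + ⟪w - w', gradient g w'⟫ ≤ g w)
    (hsmooth : ∀ w w' : H, ‖gradient g w - gradient g w'‖ ≤ α * ‖w - w'‖) :
    ∀ w w' : H,
      (1 / α) * ‖gradient g w - gradient g w'‖ ^ 2 ≤
        ⟪w - w', gradient g w - gradient g w'⟫ := by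
  intro w w'
  have hstep : 2 * (1 / α) - α * (1 / α) ^ 2 = 1 / α := by
    rcases eq_or_ne α 0 with rfl | hα
    · simp
    · field_simp; ring
  simpa only [hstep] using mul_norm_sq_gradient_sub_le_inner hdiff hconv hsmooth (1 / α) w w'

/-- **Coercivity of smooth convex functions** (Lemma 3.2): a differentiable, convex,
`α`-smooth function `g` on a real inner product space satisfies
`⟪w − w', ∇g(w) − ∇g(w')⟫ ≥ (1/α) ‖∇g(w) − ∇g(w')‖²` for all `w, w'`. -/
theorem coercivity_of_smooth_convex
    {H : Type*} [NormedAddCommGroup H] [InnerProductSpace ℝ H] [CompleteSpace H]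
    (g : H → ℝ) (α : ℝ) (hα : 0 < α)
    (hdiff : Differentiable ℝ g)
    (hconv : ∀ w w' : H, g w' + ⟪w - w', gradient g w'⟫ ≤ g w)
    (hsmooth : ∀ w w' : H, ‖gradient g w - gradient g w'‖ ≤ α * ‖w - w'‖) :
    ∀ w w' : H,
      (1 / α) * ‖gradient g w - gradient g w'‖ ^ 2 ≤
        ⟪w - w', gradient g w - gradient g w'⟫ :=
  coercivity_of_smooth_convex_general g α hdiff hconv hsmooth
end

section
/- Gradient-improved convexity inequality: let H be a real inner product space and let g : H → ℝ be differentiable, convex, and α-smooth for some α > 0. Then for all w, w' ∈ H, g(w) ≥ g(w') + ⟨w − w', ∇g(w')⟩ + (1/(2α))‖∇g(w) − ∇g(w')‖². -/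
open RealInnerProductSpace

/-!
Write `D(x, y) = g y - g x - ⟪y - x, ∇g x⟫`. Convexity and Cauchy–Schwarz give `D ≤ α ‖y - x‖²`,
and splitting `[x, y]` at its midpoint turns a bound `D ≤ c ‖y - x‖²` into
`D ≤ (c / 2 + α / 4) ‖y - x‖²`; iterating gives the descent lemma `D ≤ (α / 2) ‖y - x‖²`
without integrating along segments. Applying convexity at `w'` and the descent lemma at `w` to
the point `z = w - α⁻¹ (∇g w - ∇g w')` gives the theorem.
-/

section LinearizationGap

variable {E : Type*} [NormedAddCommGroup E] [InnerProductSpace ℝ E]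

/-- For `G = ∇f` this is the Bregman divergence `D_f(y, x)`. -/
def linearizationGap (f : E → ℝ) (G : E → E) (x y : E) : ℝ :=
  f y - f x - ⟪y - x, G x⟫

variable {f : E → ℝ} {G : E → E} {L : ℝ}

theorem linearizationGap_add_linearizationGap (x m y : E) :
    linearizationGap f G x m + linearizationGap f G m y + ⟪y - m, G m - G x⟫ =
      linearizationGap f G x y := by
  have hsplit : ⟪y - x, G x⟫ = ⟪m - x, G x⟫ + ⟪y - m, G x⟫ := by
    rw [← inner_add_left, sub_add_sub_cancel']
  simp only [linearizationGap, inner_sub_right, hsplit]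
  ring

theorem linearizationGap_le_inner_sub (hconv : ∀ x y, f y + ⟪x - y, G y⟫ ≤ f x) (x y : E) :
    linearizationGap f G x y ≤ ⟪y - x, G y - G x⟫ := by
  have h := hconv x y
  rw [← neg_sub y x, inner_neg_left] at h
  rw [linearizationGap, inner_sub_right]
  linarith

theorem inner_sub_le_of_lipschitz (hL : ∀ x y, ‖G x - G y‖ ≤ L * ‖x - y‖) (x y z : E) :
    ⟪z, G y - G x⟫ ≤ ‖z‖ * (L * ‖y - x‖) :=
  (real_inner_le_norm _ _).trans (mul_le_mul_of_nonneg_left (hL y x) (norm_nonneg z))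

theorem linearizationGap_le_of_lipschitz (hconv : ∀ x y, f y + ⟪x - y, G y⟫ ≤ f x)
    (hL : ∀ x y, ‖G x - G y‖ ≤ L * ‖x - y‖) (x y : E) :
    linearizationGap f G x y ≤ L * ‖y - x‖ ^ 2 :=
  calc linearizationGap f G x y ≤ ⟪y - x, G y - G x⟫ := linearizationGap_le_inner_sub hconv x y
    _ ≤ ‖y - x‖ * (L * ‖y - x‖) := inner_sub_le_of_lipschitz hL x y (y - x)
    _ = L * ‖y - x‖ ^ 2 := by ring

theorem linearizationGap_le_half_add_quarter (hL : ∀ x y, ‖G x - G y‖ ≤ L * ‖x - y‖) {c : ℝ}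
    (hc : ∀ x y, linearizationGap f G x y ≤ c * ‖y - x‖ ^ 2) (x y : E) :
    linearizationGap f G x y ≤ (c / 2 + L / 4) * ‖y - x‖ ^ 2 := by
  set m := midpoint ℝ x y
  have hhalf : ‖(⅟2 : ℝ) • (y - x)‖ = ‖y - x‖ / 2 := by
    rw [norm_smul]; norm_num; ring
  have hmx : ‖m - x‖ = ‖y - x‖ / 2 := by rw [midpoint_sub_left, hhalf]
  have hym : ‖y - m‖ = ‖y - x‖ / 2 := by rw [right_sub_midpoint, hhalf]
  have h₁ := hc x m
  have h₂ := hc m y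
  have h₃ := inner_sub_le_of_lipschitz hL x m (y - m)
  rw [hmx] at h₁ h₃
  rw [hym] at h₂ h₃
  rw [← linearizationGap_add_linearizationGap x m y]
  linarith

theorem linearizationGap_le_dyadic (hconv : ∀ x y, f y + ⟪x - y, G y⟫ ≤ f x)
    (hL : ∀ x y, ‖G x - G y‖ ≤ L * ‖x - y‖) (n : ℕ) (x y : E) :
    linearizationGap f G x y ≤ L / 2 * (1 + (1 / 2) ^ n) * ‖y - x‖ ^ 2 := by
  induction n generalizing x y with
  | zero => simpa [← two_mul] using linearizationGap_le_of_lipschitz hconv hL x y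
  | succ n ih =>
    convert linearizationGap_le_half_add_quarter hL ih x y using 2
    ring

theorem linearizationGap_le_half_lipschitz (hconv : ∀ x y, f y + ⟪x - y, G y⟫ ≤ f x)
    (hL : ∀ x y, ‖G x - G y‖ ≤ L * ‖x - y‖) (x y : E) :
    linearizationGap f G x y ≤ L / 2 * ‖y - x‖ ^ 2 := by
  have hlim : Filter.Tendsto (fun n : ℕ ↦ L / 2 * (1 + (1 / 2 : ℝ) ^ n) * ‖y - x‖ ^ 2)
      Filter.atTop (nhds (L / 2 * (1 + 0) * ‖y - x‖ ^ 2)) :=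
    ((tendsto_pow_atTop_nhds_zero_of_lt_one (by norm_num) (by norm_num)).const_add 1
      |>.const_mul (L / 2)).mul_const _
  rw [add_zero, mul_one] at hlim
  exact ge_of_tendsto' hlim fun n ↦ linearizationGap_le_dyadic hconv hL n x y

theorem norm_sub_sq_div_le_linearizationGap (hL₀ : 0 < L)
    (hconv : ∀ x y, f y + ⟪x - y, G y⟫ ≤ f x)
    (hdesc : ∀ x y, linearizationGap f G x y ≤ L / 2 * ‖y - x‖ ^ 2) (x y : E) :
    ‖G y - G x‖ ^ 2 / (2 * L) ≤ linearizationGap f G x y := by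
  set v := G y - G x
  set z := y - L⁻¹ • v
  have hconv_x := hconv z x
  have hdesc_y := hdesc y z
  have hzx : ⟪z - x, G x⟫ = ⟪y - x, G x⟫ - L⁻¹ * ⟪v, G x⟫ := by
    rw [sub_right_comm, inner_sub_left, real_inner_smul_left]
  have hzy : z - y = -(L⁻¹ • v) := by rw [sub_sub_cancel_left]
  have hnorm : ‖z - y‖ ^ 2 = L⁻¹ ^ 2 * ‖v‖ ^ 2 := by
    rw [hzy, norm_neg, norm_smul, mul_pow, Real.norm_eq_abs, sq_abs]
  have hinner : ⟪z - y, G y⟫ = -(L⁻¹ * ⟪v, G y⟫) := by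
    rw [hzy, inner_neg_left, real_inner_smul_left]
  have hv : L⁻¹ * ⟪v, G y⟫ - L⁻¹ * ⟪v, G x⟫ = 2 * (‖v‖ ^ 2 / (2 * L)) := by
    rw [← mul_sub, ← inner_sub_right, real_inner_self_eq_norm_sq]
    field_simp
  have hcoeff : L / 2 * (L⁻¹ ^ 2 * ‖v‖ ^ 2) = ‖v‖ ^ 2 / (2 * L) := by field_simp
  rw [linearizationGap, hnorm, hinner, hcoeff] at hdesc_y
  rw [hzx] at hconv_x
  rw [linearizationGap]
  linarith

end LinearizationGap

theorem gradient_improved_convexity_general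
    {H : Type*} [NormedAddCommGroup H] [InnerProductSpace ℝ H] [CompleteSpace H]
    (g : H → ℝ) (α : ℝ) (hα : 0 < α)
    (hconv : ∀ w w' : H, g w' + ⟪w - w', gradient g w'⟫ ≤ g w)
    (hsmooth : ∀ w w' : H, ‖gradient g w - gradient g w'‖ ≤ α * ‖w - w'‖) :
    ∀ w w' : H,
      g w' + ⟪w - w', gradient g w'⟫
        + (1 / (2 * α)) * ‖gradient g w - gradient g w'‖ ^ 2 ≤ g w := by
  intro w w'
  have h := norm_sub_sq_div_le_linearizationGap hα hconv
    (linearizationGap_le_half_lipschitz hconv hsmooth) w' w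
  rw [linearizationGap] at h
  linarith [one_div_mul_eq_div (2 * α) (‖gradient g w - gradient g w'‖ ^ 2)]

/-- **Gradient-improved convexity inequality** (Eq. (14)): a differentiable, convex,
`α`-smooth function `g` on a real inner product space satisfies
`g(w) ≥ g(w') + ⟪w − w', ∇g(w')⟫ + (1/(2α)) ‖∇g(w) − ∇g(w')‖²` for all `w, w'`. -/
theorem gradient_improved_convexity
    {H : Type*} [NormedAddCommGroup H] [InnerProductSpace ℝ H] [CompleteSpace H]
    (g : H → ℝ) (α : ℝ) (hα : 0 < α)
    (hdiff : Differentiable ℝ g)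
    (hconv : ∀ w w' : H, g w' + ⟪w - w', gradient g w'⟫ ≤ g w)
    (hsmooth : ∀ w w' : H, ‖gradient g w - gradient g w'‖ ≤ α * ‖w - w'‖) :
    ∀ w w' : H,
      g w' + ⟪w - w', gradient g w'⟫
        + (1 / (2 * α)) * ‖gradient g w - gradient g w'‖ ^ 2 ≤ g w :=
  gradient_improved_convexity_general g α hα hconv hsmooth
end
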